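/- arXiv:2310.06690 — 2 statements merged into one kernel-verified Lean document; each statement's English description precedes it below -/
import Mathlib

section
/- Let 𝒮 and 𝒵 be nonempty finite types, let p be a joint pmf on 𝒮 × 𝒵, and let q : 𝒵 → (𝒮 → ℝ) assign to each ẑ a pmf q(ẑ) on 𝒮 such that q(ẑ)(s) > 0 whenever p(s,ẑ) > 0. Then I(S;Z) ≥ Σ_{s,ẑ} p(s,ẑ) · log(q(ẑ)(s)) + H(S). -/
open scoped BigOperators

/-- Variational (Barber–Agakov) lower bound on mutual information, finite-alphabet form:
`I(S;Z) ≥ Σ_{s,ẑ} p(s,ẑ)·log q(ẑ)(s) + H(S)`. -/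
theorem barber_agakov_lower_bound
    {𝒮 𝒵 : Type*} [Fintype 𝒮] [Fintype 𝒵] [Nonempty 𝒮] [Nonempty 𝒵]
    (p : 𝒮 × 𝒵 → ℝ)
    (hp0 : ∀ sz, 0 ≤ p sz) (hp1 : ∑ sz, p sz = 1)
    (q : 𝒵 → 𝒮 → ℝ)
    (hq0 : ∀ z s, 0 ≤ q z s) (hq1 : ∀ z, ∑ s, q z s = 1)
    (hqpos : ∀ s z, 0 < p (s, z) → 0 < q z s) :
    (∑ s, ∑ z, p (s, z) *
        Real.log (p (s, z) / ((∑ z', p (s, z')) * (∑ s', p (s', z)))))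
      ≥ (∑ s, ∑ z, p (s, z) * Real.log (q z s))
        + (- ∑ s, (∑ z, p (s, z)) * Real.log (∑ z, p (s, z))) := by
  classical
  set pS : 𝒮 → ℝ := fun s => ∑ z, p (s, z) with hpS
  set pZ : 𝒵 → ℝ := fun z => ∑ s, p (s, z) with hpZ
  have hpSnn : ∀ s, 0 ≤ pS s := fun s => Finset.sum_nonneg fun z _ => hp0 _
  have hpZnn : ∀ z, 0 ≤ pZ z := fun z => Finset.sum_nonneg fun s _ => hp0 _
  -- pointwise key inequality
  have key : ∀ s z, p (s, z) * Real.log (p (s, z) / (pS s * pZ z))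
      - p (s, z) * Real.log (q z s) + p (s, z) * Real.log (pS s)
      ≥ p (s, z) - pZ z * q z s := by
    intro s z
    rcases eq_or_lt_of_le (hp0 (s, z)) with h | h
    · rw [← h]
      simp
      exact mul_nonneg (hpZnn z) (hq0 z s)
    · have hq : 0 < q z s := hqpos s z h
      have hS : 0 < pS s :=
        lt_of_lt_of_le h (Finset.single_le_sum (fun z' _ => hp0 (s, z')) (Finset.mem_univ z))
      have hZ : 0 < pZ z :=
        lt_of_lt_of_le h (Finset.single_le_sum (fun s' _ => hp0 (s', z)) (Finset.mem_univ s))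
      have hm : 0 < pZ z * q z s := mul_pos hZ hq
      have e : p (s, z) * Real.log (p (s, z) / (pS s * pZ z))
          - p (s, z) * Real.log (q z s) + p (s, z) * Real.log (pS s)
          = p (s, z) * Real.log (p (s, z) / (pZ z * q z s)) := by
        rw [Real.log_div h.ne' (mul_pos hS hZ).ne', Real.log_mul hS.ne' hZ.ne',
          Real.log_div h.ne' hm.ne', Real.log_mul hZ.ne' hq.ne']
        ring
      rw [e]
      have hlog : Real.log ((pZ z * q z s) / p (s, z)) ≤ (pZ z * q z s) / p (s, z) - 1 :=
        Real.log_le_sub_one_of_pos (div_pos hm h)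
      have hl2 : Real.log (p (s, z) / (pZ z * q z s))
          ≥ 1 - (pZ z * q z s) / p (s, z) := by
        rw [Real.log_div h.ne' hm.ne']
        rw [Real.log_div hm.ne' h.ne'] at hlog
        linarith
      have := mul_le_mul_of_nonneg_left hl2 (le_of_lt h)
      calc p (s, z) * Real.log (p (s, z) / (pZ z * q z s))
          ≥ p (s, z) * (1 - (pZ z * q z s) / p (s, z)) := this
        _ = p (s, z) - pZ z * q z s := by field_simp
  -- the lower-bound sums to zero
  have hsum1 : ∑ s, ∑ z, p (s, z) = 1 := by
    rw [← hp1, Fintype.sum_prod_type]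
  have hsum2 : ∑ s, ∑ z, pZ z * q z s = 1 := by
    rw [Finset.sum_comm]
    have : ∀ z, ∑ s, pZ z * q z s = pZ z := by
      intro z; rw [← Finset.mul_sum, hq1, mul_one]
    simp only [this]
    rw [hpZ]
    rw [Finset.sum_comm]
    exact hsum1
  have hsumge : ∑ s, ∑ z, (p (s, z) * Real.log (p (s, z) / (pS s * pZ z))
      - p (s, z) * Real.log (q z s) + p (s, z) * Real.log (pS s)) ≥ 0 := by
    have : ∑ s, ∑ z, (p (s, z) * Real.log (p (s, z) / (pS s * pZ z))
        - p (s, z) * Real.log (q z s) + p (s, z) * Real.log (pS s))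
        ≥ ∑ s, ∑ z, (p (s, z) - pZ z * q z s) := by
      apply Finset.sum_le_sum
      intro s _
      apply Finset.sum_le_sum
      intro z _
      exact key s z
    have h0 : ∑ s, ∑ z, (p (s, z) - pZ z * q z s) = 0 := by
      simp only [Finset.sum_sub_distrib]
      rw [hsum1, hsum2]; ring
    linarith
  -- split the big sum
  have hsplit : ∑ s, ∑ z, (p (s, z) * Real.log (p (s, z) / (pS s * pZ z))
      - p (s, z) * Real.log (q z s) + p (s, z) * Real.log (pS s))
      = (∑ s, ∑ z, p (s, z) * Real.log (p (s, z) / (pS s * pZ z)))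
        - (∑ s, ∑ z, p (s, z) * Real.log (q z s))
        + (∑ s, pS s * Real.log (pS s)) := by
    simp only [Finset.sum_add_distrib, Finset.sum_sub_distrib]
    congr 1
    apply Finset.sum_congr rfl
    intro s _
    rw [← Finset.sum_mul]
  rw [hsplit] at hsumge
  simp only [hpS, hpZ] at hsumge ⊢
  linarith
end

section
/- (Gumbel-Max sampling, equation (15) of the paper.) Let a ≥ 1 and let π : Fin a → ℝ be a pmf with π_i > 0 for all i. Let γ be the standard Gumbel measure on ℝ, i.e. the measure with density x ↦ exp(−x − exp(−x)) with respect to Lebesgue measure, and let P = ⨂_{i : Fin a} γ be the product measure on ℝ^{Fin a} (i.e. τ_1, …, τ_a are i.i.d. standard Gumbel). Then for every k ∈ Fin a, P( { τ : ∀ i ≠ k, τ_k + log π_k > τ_i + log π_i } ) = π_k. In other words, the index attaining the maximum of (τ_i + log π_i)_{i} is distributed according to π. -/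
open MeasureTheory
open scoped BigOperators

/-- The standard Gumbel measure on `ℝ`, with density `x ↦ exp(−x − exp(−x))`
with respect to Lebesgue measure. -/
noncomputable def gumbelMeasure : Measure ℝ :=
  volume.withDensity fun x => ENNReal.ofReal (Real.exp (-x - Real.exp (-x)))

/-! Conditioning on `τ k = t`, the events `τ i < t + log w_k - log w_i` (`i ≠ k`) are independent
with probabilities `exp (-(w_i / w_k) e^{-t})`, so the probability in question is
`E[exp (-B e^{-τ})]` for one Gumbel variable `τ`, with `B = (1 - w_k) / w_k`. This expectation is
`1 / (1 + B) = w_k`, because `x ↦ A⁻¹ exp (-A e^{-x})` is an antiderivative of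
`exp (-x - A e^{-x})`. -/

open Set Filter Topology

theorem lintegral_Iic_of_hasDerivAt_of_nonneg {F F' : ℝ → ℝ} {m : ℝ}
    (hderiv : ∀ x, HasDerivAt F (F' x) x) (hnonneg : ∀ x, 0 ≤ F' x)
    (hbot : Tendsto F atBot (𝓝 m)) (c : ℝ) :
    ∫⁻ x in Iic c, ENNReal.ofReal (F' x) = ENNReal.ofReal (F c - m) := by
  set ν := volume.withDensity fun x => ENNReal.ofReal (F' x)
  have hIoc : ∀ a ≤ c, ν (Ioc a c) = ENNReal.ofReal (F c - F a) := fun a hac => by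
    have hcont : ContinuousOn F (Icc a c) := fun x _ => (hderiv x).continuousAt.continuousWithinAt
    have hint : IntegrableOn F' (Ioc a c) :=
      intervalIntegral.integrableOn_deriv_of_nonneg hcont (fun x _ => hderiv x) fun x _ => hnonneg x
    rw [withDensity_apply _ measurableSet_Ioc, ← ofReal_integral_eq_lintegral_ofReal hint
      (.of_forall hnonneg), ← intervalIntegral.integral_of_le hac,
      intervalIntegral.integral_eq_sub_of_hasDerivAt (fun x _ => hderiv x)
        ((intervalIntegrable_iff_integrableOn_Ioc_of_le hac).2 hint)]
  have hlim : Tendsto (fun a => ν (Ioc a c)) atBot (𝓝 (ENNReal.ofReal (F c - m))) :=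
    ((ENNReal.continuous_ofReal.tendsto _).comp (hbot.const_sub (F c))).congr'
      (eventually_le_atBot c |>.mono fun a hac => (hIoc a hac).symm)
  rw [← withDensity_apply _ measurableSet_Iic]
  exact tendsto_nhds_unique (tendsto_measure_Ioc_atBot ν c) hlim

theorem lintegral_of_hasDerivAt_of_nonneg {F F' : ℝ → ℝ} {m l : ℝ}
    (hderiv : ∀ x, HasDerivAt F (F' x) x) (hnonneg : ∀ x, 0 ≤ F' x)
    (hbot : Tendsto F atBot (𝓝 m)) (htop : Tendsto F atTop (𝓝 l)) :
    ∫⁻ x, ENNReal.ofReal (F' x) = ENNReal.ofReal (l - m) := by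
  set ν := volume.withDensity fun x => ENNReal.ofReal (F' x)
  have hlim : Tendsto (fun c => ν (Iic c)) atTop (𝓝 (ENNReal.ofReal (l - m))) := by
    simp_rw [ν, withDensity_apply _ measurableSet_Iic,
      lintegral_Iic_of_hasDerivAt_of_nonneg hderiv hnonneg hbot]
    exact (ENNReal.continuous_ofReal.tendsto _).comp (htop.sub_const m)
  rw [← setLIntegral_univ, ← withDensity_apply _ MeasurableSet.univ]
  exact tendsto_nhds_unique (tendsto_measure_Iic_atTop ν) hlim

section GumbelDensity

variable {A : ℝ}

theorem hasDerivAt_inv_mul_exp_neg_mul_exp_neg (hA : A ≠ 0) (x : ℝ) :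
    HasDerivAt (fun x => A⁻¹ * Real.exp (-A * Real.exp (-x)))
      (Real.exp (-x - A * Real.exp (-x))) x := by
  have := (((Real.hasDerivAt_exp (-x)).comp x (hasDerivAt_neg x)).const_mul (-A)).exp.const_mul A⁻¹
  refine this.congr_deriv ?_
  rw [sub_eq_add_neg, Real.exp_add, Function.comp_apply]
  field_simp

theorem tendsto_inv_mul_exp_neg_mul_exp_neg_atBot (hA : 0 < A) :
    Tendsto (fun x => A⁻¹ * Real.exp (-A * Real.exp (-x))) atBot (𝓝 0) := by
  have h : Tendsto (fun x => -A * Real.exp (-x)) atBot atBot :=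
    (Real.tendsto_exp_atTop.comp tendsto_neg_atBot_atTop).const_mul_atTop_of_neg (by linarith)
  simpa using (Real.tendsto_exp_atBot.comp h).const_mul A⁻¹

theorem tendsto_inv_mul_exp_neg_mul_exp_neg_atTop :
    Tendsto (fun x => A⁻¹ * Real.exp (-A * Real.exp (-x))) atTop (𝓝 A⁻¹) := by
  have h : Tendsto (fun x => -A * Real.exp (-x)) atTop (𝓝 0) := by
    simpa using (Real.tendsto_exp_atBot.comp tendsto_neg_atTop_atBot).const_mul (-A)
  simpa using ((Real.continuous_exp.tendsto 0).comp h).const_mul A⁻¹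

theorem lintegral_Iic_exp_neg_sub_mul_exp_neg (hA : 0 < A) (c : ℝ) :
    ∫⁻ x in Iic c, ENNReal.ofReal (Real.exp (-x - A * Real.exp (-x)))
      = ENNReal.ofReal (A⁻¹ * Real.exp (-A * Real.exp (-c))) := by
  rw [lintegral_Iic_of_hasDerivAt_of_nonneg (hasDerivAt_inv_mul_exp_neg_mul_exp_neg hA.ne')
    (fun _ => (Real.exp_pos _).le) (tendsto_inv_mul_exp_neg_mul_exp_neg_atBot hA), sub_zero]

theorem lintegral_exp_neg_sub_mul_exp_neg (hA : 0 < A) :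
    ∫⁻ x, ENNReal.ofReal (Real.exp (-x - A * Real.exp (-x))) = ENNReal.ofReal A⁻¹ := by
  rw [lintegral_of_hasDerivAt_of_nonneg (hasDerivAt_inv_mul_exp_neg_mul_exp_neg hA.ne')
    (fun _ => (Real.exp_pos _).le) (tendsto_inv_mul_exp_neg_mul_exp_neg_atBot hA)
    tendsto_inv_mul_exp_neg_mul_exp_neg_atTop, sub_zero]

end GumbelDensity

theorem gumbelMeasure_Iio (c : ℝ) :
    gumbelMeasure (Iio c) = ENNReal.ofReal (Real.exp (-Real.exp (-c))) := by
  have h := lintegral_Iic_exp_neg_sub_mul_exp_neg one_pos c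
  simp only [one_mul, inv_one, neg_mul] at h
  rw [gumbelMeasure, withDensity_apply _ measurableSet_Iio, setLIntegral_congr Iio_ae_eq_Iic, h]

theorem lintegral_exp_neg_mul_exp_neg_gumbelMeasure {B : ℝ} (hB : -1 < B) :
    ∫⁻ t, ENNReal.ofReal (Real.exp (-B * Real.exp (-t))) ∂gumbelMeasure
      = ENNReal.ofReal (1 + B)⁻¹ := by
  rw [gumbelMeasure, lintegral_withDensity_eq_lintegral_mul _ (by fun_prop) (by fun_prop),
    ← lintegral_exp_neg_sub_mul_exp_neg (by linarith : 0 < 1 + B)]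
  congr 1 with t
  rw [Pi.mul_apply, ← ENNReal.ofReal_mul (Real.exp_pos _).le, ← Real.exp_add]
  ring_nf

instance : IsProbabilityMeasure gumbelMeasure where
  measure_univ := by
    simpa using lintegral_exp_neg_mul_exp_neg_gumbelMeasure (B := 0) (by norm_num)

theorem prod_gumbelMeasure_Iio_add {ι : Type*} (s : Finset ι) (t : ℝ) (c : ι → ℝ) :
    ∏ i ∈ s, gumbelMeasure (Iio (t + c i))
      = ENNReal.ofReal (Real.exp (-(∑ i ∈ s, Real.exp (-c i)) * Real.exp (-t))) := by
  simp_rw [gumbelMeasure_Iio]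
  rw [← ENNReal.ofReal_prod_of_nonneg fun _ _ => (Real.exp_pos _).le, ← Real.exp_sum, neg_mul,
    Finset.sum_mul, ← Finset.sum_neg_distrib]
  simp_rw [neg_add, Real.exp_add, mul_comm]

theorem pi_setOf_forall_ne_add_lt_add (μ : Measure ℝ) [SigmaFinite μ] {n : ℕ}
    (c : Fin (n + 1) → ℝ) (k : Fin (n + 1)) :
    Measure.pi (fun _ => μ) {τ | ∀ i, i ≠ k → τ i + c i < τ k + c k}
      = ∫⁻ t, ∏ j, μ (Iio (t + (c k - c (k.succAbove j)))) ∂μ := by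
  set T : Set (ℝ × (Fin n → ℝ)) := {p | ∀ j, p.2 j < p.1 + (c k - c (k.succAbove j))}
  have hT : MeasurableSet T := by
    simp only [T, ofPred_forall]
    exact .iInter fun j => measurableSet_lt (by fun_prop) (by fun_prop)
  have hpre : (MeasurableEquiv.piFinSuccAbove (fun _ => ℝ) k).symm ⁻¹'
      {τ | ∀ i, i ≠ k → τ i + c i < τ k + c k} = T := by
    ext ⟨t, y⟩
    have hins : (MeasurableEquiv.piFinSuccAbove (fun _ => ℝ) k).symm (t, y) = k.insertNth t y := rfl
    simp only [mem_preimage, hins, mem_ofPred_eq, T, Fin.forall_iff_succAbove k,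
      Fin.insertNth_apply_same, Fin.insertNth_apply_succAbove, ne_eq, Fin.succAbove_ne,
      not_true_eq_false, not_false_eq_true, false_imp_iff, true_imp_iff, true_and]
    exact forall_congr' fun j => by constructor <;> intro h <;> linarith
  rw [← (measurePreserving_piFinSuccAbove (fun _ => μ) k).symm.measure_preimage_equiv, hpre,
    Measure.prod_apply hT]
  congr 1 with t
  rw [show Prod.mk t ⁻¹' T = Set.pi univ fun j => Iio (t + (c k - c (k.succAbove j))) by
    ext y; simp [T], Measure.pi_pi]

theorem gumbel_max_sampling_general
    (a : ℕ) (w : Fin a → ℝ)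
    (hw0 : ∀ i, 0 < w i) (hw1 : ∑ i, w i = 1) (k : Fin a) :
    (Measure.pi fun _ : Fin a => gumbelMeasure)
        {τ : Fin a → ℝ | ∀ i, i ≠ k →
          τ i + Real.log (w i) < τ k + Real.log (w k)}
      = ENNReal.ofReal (w k) := by
  obtain ⟨n, rfl⟩ := Nat.exists_eq_add_one_of_ne_zero k.pos.ne'
  have hwk := hw0 k
  have hsum : ∑ j, Real.exp (-(Real.log (w k) - Real.log (w (k.succAbove j))))
      = (1 - w k) / w k := by
    rw [Fin.sum_univ_succAbove w k] at hw1
    simp_rw [neg_sub, Real.exp_sub, Real.exp_log (hw0 _), ← Finset.sum_div]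
    rw [eq_sub_of_add_eq' hw1]
  have hB : -1 < (1 - w k) / w k := by
    rw [lt_div_iff₀ hwk]; linarith
  rw [pi_setOf_forall_ne_add_lt_add]
  simp_rw [prod_gumbelMeasure_Iio_add, hsum]
  rw [lintegral_exp_neg_mul_exp_neg_gumbelMeasure hB]
  congr 1
  field_simp
  ring

/-- Gumbel-Max sampling (equation (15) of the paper): if `τ₁, …, τ_a` are i.i.d.
standard Gumbel and `π` is a strictly positive pmf on `Fin a`, then for each `k`,
the probability that `τ_k + log π_k` strictly exceeds `τ_i + log π_i` for all `i ≠ k`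
equals `π_k`; i.e. the argmax of `(τ_i + log π_i)_i` has law `π`. -/
theorem gumbel_max_sampling
    (a : ℕ) (ha : 1 ≤ a) (w : Fin a → ℝ)
    (hw0 : ∀ i, 0 < w i) (hw1 : ∑ i, w i = 1) (k : Fin a) :
    (Measure.pi fun _ : Fin a => gumbelMeasure)
        {τ : Fin a → ℝ | ∀ i, i ≠ k →
          τ i + Real.log (w i) < τ k + Real.log (w k)}
      = ENNReal.ofReal (w k) :=
  gumbel_max_sampling_general a w hw0 hw1 k
end
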